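/- Let n ≥ 2. In the category Crs(Grp) of reduced crossed complexes: (i) for every reduced crossed complex M, the inclusion of its truncation (⋯ → 0 → 0 → M_{n-1} → M_{n-2} → ⋯ → M₀) into M (identity in degrees ≤ n−1, trivial above) is a monomorphism in Crs(Grp), and these inclusions are the counit components of the coreflection of Crs(Grp) onto Crs(Grp)_{n-1≥}; (ii) the pair (Crs(Grp)_{n-1≥}, Crs(Grp)_{≥n}) is an ℰ-torsion theory in Crs(Grp), where ℰ is the class of reduced crossed complexes M in which M₀ acts trivially on M_i for all i ≥ n, the short exact sequence of M ∈ ℰ being given by its truncations keeping degrees ≤ n−1 and degrees ≥ n respectively; (iii) every reduced crossed complex M whose differential δ₁ : M₁ → M₀ is surjective belongs to ℰ. -/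

import Mathlib

open CategoryTheory CategoryTheory.Limits

universe v u

/-- A pair of composable morphisms is a short exact sequence if the composite is zero,
the first morphism is a kernel of the second and the second is a cokernel of the first. -/
def IsShortExact {C : Type u} [Category.{v} C] [HasZeroMorphisms C] {A X B : C}
    (i : A ⟶ X) (p : X ⟶ B) : Prop :=
  ∃ w : i ≫ p = 0,
    Nonempty (IsLimit (KernelFork.ofι i w)) ∧ Nonempty (IsColimit (CokernelCofork.ofπ p w))

/-- A torsion theory relative to a class `E` of objects. -/
structure IsRelTorsionTheory {C : Type u} [Category.{v} C] [HasZeroMorphisms C]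
    (E T F : C → Prop) : Prop where
  hom_zero : ∀ {X Y : C} (f : X ⟶ Y), T X → F Y → f = 0
  exists_seq : ∀ X : C, E X → ∃ (TX FX : C) (i : TX ⟶ X) (p : X ⟶ FX),
    T TX ∧ F FX ∧ IsShortExact i p

/-- A reduced crossed complex (crossed complex in groups): a proper chain complex of groups
`⋯ → M_n → M_{n-1} → ⋯ → M_1 → M_0` with actions of `M_0` on each `M_{n+1}`, such that
`M_n` is abelian for `n ≥ 2`, elements of `δ₁(M₁)` act trivially on `M_n` for `n ≥ 2`,
the differentials are `M₀`-equivariant and `δ₁ : M₁ → M₀` is a crossed module. -/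
structure Crs : Type 1 where
  M : ℕ → Type
  [grp : ∀ n, Group (M n)]
  δ : ∀ n : ℕ, M (n + 1) →* M n
  chain : ∀ (n : ℕ) (x : M (n + 2)), δ n (δ (n + 1) x) = 1
  act : ∀ n : ℕ, M 0 →* MulAut (M (n + 1))
  comm : ∀ (n : ℕ) (x y : M (n + 2)), x * y = y * x
  proper : ∀ (n : ℕ) (g : M n) (x : M (n + 1)), ∃ y : M (n + 1), g * δ n x * g⁻¹ = δ n y
  actTriv : ∀ (n : ℕ) (m : M 1) (x : M (n + 2)), act (n + 1) (δ 0 m) x = x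
  equivar : ∀ (n : ℕ) (m₀ : M 0) (x : M (n + 2)),
    δ (n + 1) (act (n + 1) m₀ x) = act n m₀ (δ (n + 1) x)
  xmodEquivar : ∀ (m₀ : M 0) (m : M 1), δ 0 (act 0 m₀ m) = m₀ * δ 0 m * m₀⁻¹
  peiffer : ∀ (m m' : M 1), act 0 (δ 0 m) m' = m * m' * m⁻¹

attribute [instance] Crs.grp

/-- A morphism of reduced crossed complexes: a chain map preserving the actions. -/
structure CrsHom (K L : Crs) where
  f : ∀ n : ℕ, K.M n →* L.M n
  comm : ∀ (n : ℕ) (x : K.M (n + 1)), f n (K.δ n x) = L.δ n (f (n + 1) x)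
  actComm : ∀ (n : ℕ) (m₀ : K.M 0) (x : K.M (n + 1)),
    f (n + 1) (K.act n m₀ x) = L.act n (f 0 m₀) (f (n + 1) x)

theorem CrsHom.ext' {K L : Crs} {f g : CrsHom K L} (h : ∀ n, f.f n = g.f n) : f = g := by
  cases f; cases g
  simp only [CrsHom.mk.injEq]
  exact funext h

/-- The category of reduced crossed complexes. -/
instance : Category Crs where
  Hom := CrsHom
  id K := { f := fun n => MonoidHom.id _, comm := fun _ _ => rfl, actComm := fun _ _ _ => rfl }
  comp {K L P} f g :=
    { f := fun n => (g.f n).comp (f.f n)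
      comm := fun n x => by simp only [MonoidHom.comp_apply, f.comm, g.comm]
      actComm := fun n m₀ x => by simp only [MonoidHom.comp_apply, f.actComm, g.actComm] }
  id_comp f := CrsHom.ext' fun n => rfl
  comp_id f := CrsHom.ext' fun n => rfl
  assoc f g h := CrsHom.ext' fun n => rfl

/-- The category of reduced crossed complexes has zero morphisms. -/
instance : HasZeroMorphisms Crs where
  zero K L :=
    ⟨{ f := fun n => 1
       comm := fun n x => by simp
       actComm := fun n m₀ x => by simp }⟩
  comp_zero {K L} f P := CrsHom.ext' fun n => MonoidHom.one_comp _
  zero_comp K {L P} f := CrsHom.ext' fun n => MonoidHom.comp_one _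

/-!
The truncation `T` of `X` below degree `n` is the subcomplex that is `⊤` in degrees `< n` and `⊥`
in degrees `≥ n`; since `⊤` and `⊥` are characteristic, `δ` and the action restrict to it. The
cokernel `F = X/T` is `X` in degrees `≥ n` and trivial below. As `n ≥ 2`, every group of `F` is
abelian and `F₀` is trivial, so `F` is a crossed complex with trivial action; `X → F` preserves the
actions exactly when `M₀` acts trivially on `X` in degrees `≥ n`. Kernel and cokernel properties are
then those of subgroups and quotient groups degreewise, and surjectivity of `δ₁` makes every action
in degrees `≥ 2` trivial by the axiom that `δ₁(M₁)` acts trivially there.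
-/

namespace CrsHom

variable {K L : Crs}

lemma eq_zero_of_subsingleton (f : K ⟶ L)
    (h : ∀ i, Subsingleton (K.M i) ∨ Subsingleton (L.M i)) : f = 0 :=
  CrsHom.ext' fun i => MonoidHom.ext fun x => by
    rcases h i with hK | hL
    · rw [Subsingleton.elim x 1, map_one, map_one]
    · exact Subsingleton.elim _ _

lemma mono_of_injective (f : K ⟶ L) (hf : ∀ i, Function.Injective (f.f i)) : Mono f :=
  ⟨fun _ _ hgh => CrsHom.ext' fun i => MonoidHom.ext fun x =>
    hf i (congrArg (fun φ : _ ⟶ L => φ.f i x) hgh)⟩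

lemma epi_of_surjective (f : K ⟶ L) (hf : ∀ i, Function.Surjective (f.f i)) : Epi f :=
  ⟨fun _ _ hgh => CrsHom.ext' fun i => MonoidHom.ext fun y => by
    obtain ⟨x, rfl⟩ := hf i y
    exact congrArg (fun φ : K ⟶ _ => φ.f i x) hgh⟩

end CrsHom

namespace Crs

lemma mul_comm_of_two_le (X : Crs) {i : ℕ} (hi : 2 ≤ i) (x y : X.M i) : x * y = y * x := by
  obtain ⟨k, rfl⟩ := Nat.exists_eq_add_of_le' hi
  exact X.comm k x y

def ofAbelian (M : ℕ → Type) [∀ i, Group (M i)] (δ : ∀ i, M (i + 1) →* M i)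
    (chain : ∀ i x, δ i (δ (i + 1) x) = 1) (mul_comm : ∀ i (a b : M i), a * b = b * a) : Crs where
  M := M
  δ := δ
  chain := chain
  act _ := 1
  comm i := mul_comm (i + 2)
  proper i g x := ⟨x, by rw [mul_comm i g, mul_inv_cancel_right]⟩
  actTriv _ _ _ := rfl
  equivar _ _ _ := rfl
  xmodEquivar m₀ m := by rw [mul_comm 0 m₀, mul_inv_cancel_right]; rfl
  peiffer m m' := by rw [mul_comm 1 m, mul_inv_cancel_right]; rfl

section Subcomplex

variable (X : Crs) (S : ∀ i, Subgroup (X.M i)) [∀ i, (S i).Characteristic]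
  (map_δ : ∀ i, ∀ x ∈ S (i + 1), X.δ i x ∈ S i)
  (proper : ∀ i, ∀ g ∈ S i, ∀ x ∈ S (i + 1), ∃ y ∈ S (i + 1), g * X.δ i x * g⁻¹ = X.δ i y)

def subcomplex : Crs where
  M i := S i
  δ i := ((X.δ i).comp (S (i + 1)).subtype).codRestrict (S i) fun x => map_δ i x x.2
  chain i x := Subtype.ext (X.chain i x)
  act i := (MulAut.characteristic (S (i + 1))).comp ((X.act i).comp (S 0).subtype)
  comm i x y := Subtype.ext (X.comm i x y)
  proper i g x :=
    let ⟨y, hy, h⟩ := proper i g g.2 x x.2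
    ⟨⟨y, hy⟩, Subtype.ext h⟩
  actTriv i m x := Subtype.ext (X.actTriv i m x)
  equivar i m₀ x := Subtype.ext (X.equivar i m₀ x)
  xmodEquivar m₀ m := Subtype.ext (X.xmodEquivar m₀ m)
  peiffer m m' := Subtype.ext (X.peiffer m m')

def subcomplexι : X.subcomplex S map_δ proper ⟶ X where
  f i := (S i).subtype
  comm _ _ := rfl
  actComm _ _ _ := rfl

def subcomplexLift {W : Crs} (g : W ⟶ X) (hg : ∀ i x, g.f i x ∈ S i) :
    W ⟶ X.subcomplex S map_δ proper where
  f i := (g.f i).codRestrict (S i) (hg i)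
  comm i x := Subtype.ext (g.comm i x)
  actComm i m₀ x := Subtype.ext (g.actComm i m₀ x)

@[simp] lemma subcomplexLift_comp_ι {W : Crs} (g : W ⟶ X) (hg : ∀ i x, g.f i x ∈ S i) :
    X.subcomplexLift S map_δ proper g hg ≫ X.subcomplexι S map_δ proper = g :=
  CrsHom.ext' fun _ => rfl

end Subcomplex

section Truncation

variable (X : Crs) (n : ℕ)

def truncLTSubgroup (i : ℕ) : Subgroup (X.M i) := if n ≤ i then ⊥ else ⊤

instance (i : ℕ) : (X.truncLTSubgroup n i).Characteristic := by
  unfold truncLTSubgroup; split_ifs <;> infer_instance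

variable {X n}

lemma mem_truncLTSubgroup {i : ℕ} {x : X.M i} : x ∈ X.truncLTSubgroup n i ↔ (n ≤ i → x = 1) := by
  unfold truncLTSubgroup; split_ifs with h <;> simp [h]

lemma mem_truncLTSubgroup_of_lt {i : ℕ} (hi : i < n) (x : X.M i) : x ∈ X.truncLTSubgroup n i :=
  mem_truncLTSubgroup.2 fun h => absurd h (Nat.not_le.2 hi)

variable (X n)

lemma map_δ_mem_truncLTSubgroup (i : ℕ) (x : X.M (i + 1)) (hx : x ∈ X.truncLTSubgroup n (i + 1)) :
    X.δ i x ∈ X.truncLTSubgroup n i :=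
  mem_truncLTSubgroup.2 fun h => by rw [mem_truncLTSubgroup.1 hx (h.trans i.le_succ), map_one]

lemma proper_truncLTSubgroup (i : ℕ) (g : X.M i) (x : X.M (i + 1))
    (hx : x ∈ X.truncLTSubgroup n (i + 1)) :
    ∃ y ∈ X.truncLTSubgroup n (i + 1), g * X.δ i x * g⁻¹ = X.δ i y := by
  by_cases h : n ≤ i + 1
  · refine ⟨1, one_mem _, ?_⟩
    rw [mem_truncLTSubgroup.1 hx h, map_one, mul_one, mul_inv_cancel]
  · obtain ⟨y, hy⟩ := X.proper i g x
    exact ⟨y, mem_truncLTSubgroup_of_lt (Nat.not_le.1 h) y, hy⟩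

def truncLT : Crs :=
  X.subcomplex (X.truncLTSubgroup n) (X.map_δ_mem_truncLTSubgroup n)
    fun i g _ => X.proper_truncLTSubgroup n i g

def ιTruncLT : X.truncLT n ⟶ X := X.subcomplexι _ _ _

instance : Mono (X.ιTruncLT n) := CrsHom.mono_of_injective _ fun _ => Subtype.val_injective

variable {X n}

lemma truncLT_subsingleton {i : ℕ} (hi : n ≤ i) : Subsingleton ((X.truncLT n).M i) :=
  ⟨fun a b => Subtype.ext <| by
    rw [mem_truncLTSubgroup.1 a.2 hi, mem_truncLTSubgroup.1 b.2 hi]⟩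

lemma ιTruncLT_bijective {i : ℕ} (hi : i < n) : Function.Bijective ((X.ιTruncLT n).f i) :=
  ⟨Subtype.val_injective, fun x => ⟨⟨x, mem_truncLTSubgroup_of_lt hi x⟩, rfl⟩⟩

lemma existsUnique_lift_ιTruncLT {W : Crs} (hW : ∀ i, n ≤ i → Subsingleton (W.M i))
    (g : W ⟶ X) : ∃! h : W ⟶ X.truncLT n, h ≫ X.ιTruncLT n = g := by
  have hg : ∀ i x, g.f i x ∈ X.truncLTSubgroup n i := fun i x =>
    mem_truncLTSubgroup.2 fun hi => by
      have := hW i hi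
      rw [Subsingleton.elim x 1, map_one]
  exact ⟨X.subcomplexLift _ _ _ g hg, X.subcomplexLift_comp_ι _ _ _ g hg, fun _ hh =>
    (cancel_mono (X.ιTruncLT n)).1 (hh.trans (X.subcomplexLift_comp_ι _ _ _ g hg).symm)⟩

lemma truncGE_subsingleton {i : ℕ} (hi : i < n) :
    Subsingleton (X.M i ⧸ X.truncLTSubgroup n i) :=
  ⟨fun a b => QuotientGroup.induction_on a fun _ => QuotientGroup.induction_on b fun _ =>
    QuotientGroup.eq_iff_div_mem.2 (mem_truncLTSubgroup_of_lt hi _)⟩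

lemma truncGE_mul_comm (hn : 2 ≤ n) (i : ℕ) (a b : X.M i ⧸ X.truncLTSubgroup n i) :
    a * b = b * a := by
  by_cases hi : n ≤ i
  · induction a using QuotientGroup.induction_on
    induction b using QuotientGroup.induction_on
    rw [← QuotientGroup.mk_mul, ← QuotientGroup.mk_mul, X.mul_comm_of_two_le (hn.trans hi)]
  · have := truncGE_subsingleton (X := X) (Nat.not_le.1 hi)
    exact Subsingleton.elim _ _

variable (X n)

def truncGEδ (i : ℕ) :
    X.M (i + 1) ⧸ X.truncLTSubgroup n (i + 1) →* X.M i ⧸ X.truncLTSubgroup n i :=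
  QuotientGroup.map _ _ (X.δ i) (X.map_δ_mem_truncLTSubgroup n i)

lemma truncGEδ_truncGEδ (i : ℕ) (x : X.M (i + 2) ⧸ X.truncLTSubgroup n (i + 2)) :
    X.truncGEδ n i (X.truncGEδ n (i + 1) x) = 1 :=
  QuotientGroup.induction_on x fun x => by
    change ((X.δ i (X.δ (i + 1) x) : X.M i) : X.M i ⧸ X.truncLTSubgroup n i) = 1
    rw [X.chain, QuotientGroup.mk_one]

/-- The quotient `X / X.truncLT n`. -/
def truncGE (hn : 2 ≤ n) : Crs :=
  ofAbelian _ (X.truncGEδ n) (X.truncGEδ_truncGEδ n) (truncGE_mul_comm hn)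

def ActsTriviallyFrom : Prop := ∀ i, n ≤ i + 1 → ∀ (m₀ : X.M 0) (x : X.M (i + 1)), X.act i m₀ x = x

def πTruncGE (hn : 2 ≤ n) (hX : X.ActsTriviallyFrom n) : X ⟶ X.truncGE n hn where
  f i := QuotientGroup.mk' _
  comm _ _ := rfl
  actComm i m₀ x := by
    by_cases hi : n ≤ i + 1
    · rw [hX i hi]; rfl
    · exact (truncGE_subsingleton (Nat.not_le.1 hi)).elim _ _

variable {X n}

lemma πTruncGE_bijective (hn : 2 ≤ n) (hX : X.ActsTriviallyFrom n) {i : ℕ} (hi : n ≤ i) :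
    Function.Bijective ((X.πTruncGE n hn hX).f i) := by
  refine ⟨(MonoidHom.ker_eq_bot_iff _).1 ?_, QuotientGroup.mk'_surjective _⟩
  change (QuotientGroup.mk' _).ker = ⊥
  rw [QuotientGroup.ker_mk', truncLTSubgroup, if_pos hi]

def truncGEDesc (hn : 2 ≤ n) {W : Crs} (c : X ⟶ W) (hc : X.ιTruncLT n ≫ c = 0) :
    X.truncGE n hn ⟶ W where
  f i := QuotientGroup.lift _ (c.f i) fun x hx =>
    congrArg (fun φ : X.truncLT n ⟶ W => φ.f i (⟨x, hx⟩ : (X.truncLT n).M i)) hc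
  comm i x := QuotientGroup.induction_on x fun x => c.comm i x
  actComm i m₀ x := QuotientGroup.induction_on m₀ fun m₀ => QuotientGroup.induction_on x fun x => by
    have hm₀ : c.f 0 m₀ = 1 := congrArg (fun φ : X.truncLT n ⟶ W => φ.f 0
      (⟨m₀, mem_truncLTSubgroup_of_lt (by omega) m₀⟩ : (X.truncLT n).M 0)) hc
    change c.f (i + 1) x = W.act i (c.f 0 m₀) (c.f (i + 1) x)
    rw [hm₀, map_one]
    rfl

lemma πTruncGE_comp_truncGEDesc (hn : 2 ≤ n) (hX : X.ActsTriviallyFrom n) {W : Crs} (c : X ⟶ W)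
    (hc : X.ιTruncLT n ≫ c = 0) : X.πTruncGE n hn hX ≫ truncGEDesc hn c hc = c :=
  CrsHom.ext' fun _ => MonoidHom.ext fun _ => rfl

lemma ιTruncLT_comp_πTruncGE (hn : 2 ≤ n) (hX : X.ActsTriviallyFrom n) :
    X.ιTruncLT n ≫ X.πTruncGE n hn hX = 0 :=
  CrsHom.ext' fun _ => MonoidHom.ext fun x => (QuotientGroup.eq_one_iff _).2 x.2

instance (hn : 2 ≤ n) (hX : X.ActsTriviallyFrom n) : Epi (X.πTruncGE n hn hX) :=
  CrsHom.epi_of_surjective _ fun _ => QuotientGroup.mk'_surjective _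

def isLimitTruncLT (hn : 2 ≤ n) (hX : X.ActsTriviallyFrom n) :
    IsLimit (KernelFork.ofι _ (ιTruncLT_comp_πTruncGE hn hX)) :=
  KernelFork.IsLimit.ofι _ _
    (fun g hg => X.subcomplexLift _ _ _ g fun i x => (QuotientGroup.eq_one_iff _).1
      (congrArg (fun φ : _ ⟶ X.truncGE n hn => φ.f i x) hg))
    (fun g _ => X.subcomplexLift_comp_ι _ _ _ g _)
    (fun g _ _ hh => (cancel_mono (X.ιTruncLT n)).1
      (hh.trans (X.subcomplexLift_comp_ι _ _ _ g _).symm))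

def isColimitTruncGE (hn : 2 ≤ n) (hX : X.ActsTriviallyFrom n) :
    IsColimit (CokernelCofork.ofπ _ (ιTruncLT_comp_πTruncGE hn hX)) :=
  CokernelCofork.IsColimit.ofπ _ _ (fun c hc => truncGEDesc hn c hc)
    (fun c hc => πTruncGE_comp_truncGEDesc hn hX c hc)
    (fun c hc _ hh => (cancel_epi (X.πTruncGE n hn hX)).1
      (hh.trans (πTruncGE_comp_truncGEDesc hn hX c hc).symm))

lemma isShortExact_ιTruncLT_πTruncGE (hn : 2 ≤ n) (hX : X.ActsTriviallyFrom n) :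
    IsShortExact (X.ιTruncLT n) (X.πTruncGE n hn hX) :=
  ⟨ιTruncLT_comp_πTruncGE hn hX, ⟨isLimitTruncLT hn hX⟩, ⟨isColimitTruncGE hn hX⟩⟩

lemma actsTriviallyFrom_of_surjective (hn : 2 ≤ n) (h : Function.Surjective (X.δ 0)) :
    X.ActsTriviallyFrom n := by
  intro i hi m₀ x
  obtain ⟨m, rfl⟩ := h m₀
  obtain ⟨j, rfl⟩ : ∃ j, i = j + 1 := ⟨i - 1, by omega⟩
  exact X.actTriv j m x

end Truncation

end Crs

/-- Let `n ≥ 2`.  In the category `Crs(Grp)` of reduced crossed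
complexes: (i) for every `M`, the inclusion of its truncation keeping degrees `≤ n-1`
(trivial in degrees `≥ n`) is a monomorphism and these inclusions are the counit
components of the coreflection onto `Crs(Grp)_{n-1≥}`; (ii) the pair
`(Crs(Grp)_{n-1≥}, Crs(Grp)_{≥n})` is an `ℰ`-torsion theory, where `ℰ` is the class of
reduced crossed complexes on which `M₀` acts trivially in all degrees `≥ n`, the short
exact sequence of `M ∈ ℰ` being given by the two truncations; (iii) every reduced crossed
complex with surjective `δ₁ : M₁ → M₀` belongs to `ℰ`. -/
theorem crs_truncation_coreflective_relTorsionTheory (n : ℕ) (hn : 2 ≤ n) :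
    (∀ X : Crs, ∃ (T : Crs) (ι : T ⟶ X),
      (∀ i : ℕ, i < n → Function.Bijective (CrsHom.f ι i)) ∧
      (∀ i : ℕ, n ≤ i → Subsingleton (T.M i)) ∧
      Mono ι ∧
      (∀ S : Crs, (∀ i : ℕ, n ≤ i → Subsingleton (S.M i)) →
        ∀ g : S ⟶ X, ∃! h : S ⟶ T, h ≫ ι = g)) ∧
    IsRelTorsionTheory (C := Crs)
      (fun X => ∀ i : ℕ, n ≤ i + 1 →
        ∀ (m₀ : X.M 0) (x : X.M (i + 1)), X.act i m₀ x = x)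
      (fun X => ∀ i : ℕ, n ≤ i → Subsingleton (X.M i))
      (fun X => ∀ i : ℕ, i < n → Subsingleton (X.M i)) ∧
    (∀ X : Crs,
      (∀ i : ℕ, n ≤ i + 1 → ∀ (m₀ : X.M 0) (x : X.M (i + 1)), X.act i m₀ x = x) →
      ∃ (T F : Crs) (ι : T ⟶ X) (p : X ⟶ F),
        (∀ i : ℕ, n ≤ i → Subsingleton (T.M i)) ∧
        (∀ i : ℕ, i < n → Subsingleton (F.M i)) ∧
        IsShortExact ι p ∧
        (∀ i : ℕ, i < n → Function.Bijective (CrsHom.f ι i)) ∧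
        (∀ i : ℕ, n ≤ i → Function.Bijective (CrsHom.f p i))) ∧
    (∀ X : Crs, Function.Surjective (X.δ 0) →
      ∀ i : ℕ, n ≤ i + 1 → ∀ (m₀ : X.M 0) (x : X.M (i + 1)), X.act i m₀ x = x) := by
  refine ⟨fun X => ⟨X.truncLT n, X.ιTruncLT n, fun _ => Crs.ιTruncLT_bijective,
      fun _ => Crs.truncLT_subsingleton, inferInstance, fun _ => Crs.existsUnique_lift_ιTruncLT⟩,
    ⟨fun f hT hF => f.eq_zero_of_subsingleton fun i => (le_or_gt n i).imp (hT i) (hF i),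
      fun X hX => ⟨_, _, _, _, fun _ => Crs.truncLT_subsingleton,
        fun _ => Crs.truncGE_subsingleton, Crs.isShortExact_ιTruncLT_πTruncGE hn hX⟩⟩,
    fun X hX => ⟨_, _, _, _, fun _ => Crs.truncLT_subsingleton,
      fun _ => Crs.truncGE_subsingleton, Crs.isShortExact_ιTruncLT_πTruncGE hn hX,
      fun _ => Crs.ιTruncLT_bijective, fun _ => Crs.πTruncGE_bijective hn hX⟩,
    fun _ => Crs.actsTriviallyFrom_of_surjective hn⟩
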